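/- Let σ be a linear (in x,y) endomorphism of K⟨x,y,z⟩ fixing z, with σ(x) = Σ α_{pq} zᵖ x z^q + Σ β_{pq} zᵖ y z^q + f₀(z) and σ(y) = Σ γ_{pq} zᵖ x z^q + Σ δ_{pq} zᵖ y z^q + g₀(z). Then the composition of two such endomorphisms corresponds to multiplication of the associated 2×2 matrices over K[z₁,z₂], where the matrix of σ has entries a = Σ α_{pq} z₁ᵖ z₂^q, c = Σ γ_{pq} z₁ᵖ z₂^q in the first row and b = Σ β_{pq} z₁ᵖ z₂^q, d = Σ δ_{pq} z₁ᵖ z₂^q in the second row. -/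

import Mathlib

noncomputable section

variable (K : Type*) [Field K]

local notation "x" => FreeAlgebra.ι K (0 : Fin 3)
local notation "y" => FreeAlgebra.ι K (1 : Fin 3)
local notation "z" => FreeAlgebra.ι K (2 : Fin 3)

/-- The "sandwich" action of K[z₁,z₂] on K⟨x,y,z⟩: the monomial z₁ᵖz₂^q acts
on w by w ↦ zᵖ w z^q, extended linearly. -/
def sandwich (p : MvPolynomial (Fin 2) K) (w : FreeAlgebra K (Fin 3)) :
    FreeAlgebra K (Fin 3) :=
  (AddMonoidAlgebra.coeff p).sum fun e c => c • (z ^ e 0 * w * z ^ e 1)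

/-- The endomorphism of K⟨x,y,z⟩, linear in x, y and fixing z, associated to a
2×2 matrix M over K[z₁,z₂]: x ↦ Σ α_{pq} zᵖxz^q + Σ β_{pq} zᵖyz^q,
y ↦ Σ γ_{pq} zᵖxz^q + Σ δ_{pq} zᵖyz^q, z ↦ z, where the matrix is
!![a, c; b, d] with a = Σ α_{pq} z₁ᵖz₂^q, etc. (translation parts zero). -/
def linEndo (M : Matrix (Fin 2) (Fin 2) (MvPolynomial (Fin 2) K)) :
    FreeAlgebra K (Fin 3) →ₐ[K] FreeAlgebra K (Fin 3) :=
  FreeAlgebra.lift K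
    ![sandwich K (M 0 0) x + sandwich K (M 1 0) y,
      sandwich K (M 0 1) x + sandwich K (M 1 1) y,
      z]

/-! The sandwich action makes K⟨x,y,z⟩ a K[z₁,z₂]-module and commutes with every algebra
endomorphism fixing `z`. So if an element `sandwich a x + sandwich b y` is recorded by its
coefficient vector `(a, b)`, then `linEndo K M` sends `x` and `y` to the columns of `M` and acts
on coefficient vectors as `M *ᵥ ·`; the columns of `M * N` are `M` applied to those of `N`. -/

lemma sandwich_monomial (e : Fin 2 →₀ ℕ) (c : K) (w : FreeAlgebra K (Fin 3)) :
    sandwich K (MvPolynomial.monomial e c) w = c • (z ^ e 0 * w * z ^ e 1) := by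
  rw [sandwich, MvPolynomial.sum_monomial_eq (zero_smul K _)]

lemma sandwich_add_left (p q : MvPolynomial (Fin 2) K) (w : FreeAlgebra K (Fin 3)) :
    sandwich K (p + q) w = sandwich K p w + sandwich K q w :=
  Finsupp.sum_add_index' (fun _ => zero_smul K _) fun _ _ _ => add_smul _ _ _

lemma sandwich_add_right (p : MvPolynomial (Fin 2) K) (w v : FreeAlgebra K (Fin 3)) :
    sandwich K p (w + v) = sandwich K p w + sandwich K p v := by
  simp only [sandwich, mul_add, add_mul, smul_add, Finsupp.sum_add]

lemma sandwich_mul (p q : MvPolynomial (Fin 2) K) (w : FreeAlgebra K (Fin 3)) :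
    sandwich K (p * q) w = sandwich K p (sandwich K q w) := by
  induction p using MvPolynomial.induction_on' with
  | add p₁ p₂ h₁ h₂ => rw [add_mul, sandwich_add_left, h₁, h₂, sandwich_add_left]
  | monomial e c =>
    induction q using MvPolynomial.induction_on' with
    | add q₁ q₂ h₁ h₂ =>
      rw [mul_add, sandwich_add_left, h₁, h₂, sandwich_add_left, sandwich_add_right]
    | monomial f d =>
      rw [MvPolynomial.monomial_mul, sandwich_monomial, sandwich_monomial, sandwich_monomial,
        mul_smul_comm, smul_mul_assoc, smul_smul]
      simp [pow_add, mul_assoc, pow_mul_comm]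

lemma AlgHom.map_sandwich (φ : FreeAlgebra K (Fin 3) →ₐ[K] FreeAlgebra K (Fin 3)) (hφ : φ z = z)
    (p : MvPolynomial (Fin 2) K) (w : FreeAlgebra K (Fin 3)) :
    φ (sandwich K p w) = sandwich K p (φ w) := by
  rw [sandwich, map_finsuppSum]
  refine Finsupp.sum_congr fun e _ => ?_
  rw [map_smul, map_mul, map_mul, map_pow, map_pow, hφ]

def sandwichComb (v : Fin 2 → MvPolynomial (Fin 2) K) : FreeAlgebra K (Fin 3) :=
  sandwich K (v 0) x + sandwich K (v 1) y

section LinEndo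

open Matrix

variable (M : Matrix (Fin 2) (Fin 2) (MvPolynomial (Fin 2) K))

lemma linEndo_x : linEndo K M x = sandwichComb K (Mᵀ 0) := by
  simp [linEndo, sandwichComb]

lemma linEndo_y : linEndo K M y = sandwichComb K (Mᵀ 1) := by
  simp [linEndo, sandwichComb]

lemma linEndo_z : linEndo K M z = z := by
  simp [linEndo]

lemma linEndo_sandwichComb (v : Fin 2 → MvPolynomial (Fin 2) K) :
    linEndo K M (sandwichComb K v) = sandwichComb K (M *ᵥ v) := by
  have hz := linEndo_z K M
  rw [sandwichComb, map_add, AlgHom.map_sandwich K _ hz, AlgHom.map_sandwich K _ hz,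
    linEndo_x, linEndo_y]
  simp only [sandwichComb, sandwich_add_right, ← sandwich_mul, mulVec, dotProduct,
    Fin.sum_univ_two, transpose_apply, sandwich_add_left, mul_comm (v _)]
  abel

end LinEndo

/-- Composition of linear-in-x,y endomorphisms of K⟨x,y,z⟩ fixing z corresponds
to multiplication of the associated 2×2 matrices over K[z₁,z₂] (modulo the
translation parts, here taken to be zero). -/
theorem stmt_15 (M N : Matrix (Fin 2) (Fin 2) (MvPolynomial (Fin 2) K)) :
    (linEndo K M).comp (linEndo K N) = linEndo K (M * N) := by
  refine FreeAlgebra.hom_ext (funext fun i => ?_)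
  fin_cases i
  · show linEndo K M (linEndo K N x) = linEndo K (M * N) x
    rw [linEndo_x, linEndo_sandwichComb, linEndo_x, Matrix.transpose_mul,
      Matrix.mul_apply_eq_vecMul, Matrix.vecMul_transpose]
  · show linEndo K M (linEndo K N y) = linEndo K (M * N) y
    rw [linEndo_y, linEndo_sandwichComb, linEndo_y, Matrix.transpose_mul,
      Matrix.mul_apply_eq_vecMul, Matrix.vecMul_transpose]
  · show linEndo K M (linEndo K N z) = linEndo K (M * N) z
    rw [linEndo_z, linEndo_z, linEndo_z]

end
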